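/- arXiv:1012.5253 — 3 statements merged into one kernel-verified Lean document; each statement's English description precedes it below -/
import Mathlib

section
/- If P is a hexagonal grid polygon whose adjacency graph is a simple path on its C(P) cells (a corridor of width 1), then E(P) = 4·C(P) + 2, and every exploration tour of P has length at least 2·C(P) − 2 = C(P) + (1/4)·E(P) − 5/2; hence the upper bound C + E/4 − 5/2 for exploring simple hexagonal grid polygons is tight. -/
/-- A hexagonal grid cell in axial coordinates. -/
abbrev HexCell : Type := ℤ × ℤ

/-- The six neighbors of a hexagonal cell. -/
def hexNbrs (c : HexCell) : Finset HexCell :=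
  {(c.1 + 1, c.2), (c.1 - 1, c.2), (c.1, c.2 + 1), (c.1, c.2 - 1),
   (c.1 + 1, c.2 - 1), (c.1 - 1, c.2 + 1)}

/-- Adjacency of hexagonal cells. -/
def hexAdj (a b : HexCell) : Prop := b ∈ hexNbrs a

/-- A set `S` is connected under the relation `adj` (restricted to `S`). -/
def connectedOn {α : Type} (adj : α → α → Prop) (S : Set α) : Prop :=
  ∀ a ∈ S, ∀ b ∈ S, Relation.ReflTransGen (fun x y => x ∈ S ∧ y ∈ S ∧ adj x y) a b

/-- A hexagonal grid polygon: a finite nonempty set of cells, connected under adjacency. -/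
def hexPolygon (P : Finset HexCell) : Prop :=
  P.Nonempty ∧ connectedOn hexAdj (↑P : Set HexCell)

/-- A hexagonal grid polygon is simple if its complement is connected under adjacency. -/
def hexSimple (P : Finset HexCell) : Prop :=
  connectedOn hexAdj ((↑P : Set HexCell)ᶜ)

/-- The perimeter `E(P)`: the number of pairs `(c, c')` with `c ∈ P`, `c' ∉ P`, adjacent. -/
def hexPerim (P : Finset HexCell) : ℕ :=
  ∑ c ∈ P, (hexNbrs c \ P).card

/-- An exploration tour of `P`: a closed walk `w 0, w 1, …, w L` in `P`
(consecutive cells adjacent, `w 0 = w L`) visiting every cell of `P`;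
its length is `L` (the number of steps). -/
def IsHexTour (P : Finset HexCell) (w : ℕ → HexCell) (L : ℕ) : Prop :=
  w 0 = w L ∧ (∀ i ≤ L, w i ∈ P) ∧ (∀ i < L, hexAdj (w i) (w (i + 1))) ∧
    ∀ c ∈ P, ∃ i ≤ L, w i = c

/-- A path in `P` from `s` to `t`: a list of cells of `P`, consecutive cells adjacent;
its length (number of steps) is `l.length - 1`. -/
def IsHexPathIn (P : Finset HexCell) (l : List HexCell) (s t : HexCell) : Prop :=
  l.head? = some s ∧ l.getLast? = some t ∧ (∀ c ∈ l, c ∈ P) ∧ l.Chain' hexAdj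

/-- The first layer of `P`: cells of `P` adjacent to some cell not in `P`. -/
def hexFirstLayer (P : Finset HexCell) : Finset HexCell :=
  P.filter (fun c => (hexNbrs c \ P).Nonempty)

/-- The `ℓ`-offset of `P`: remove the first layer `ℓ` times. -/
def hexOffset (ℓ : ℕ) (P : Finset HexCell) : Finset HexCell :=
  (fun Q => Q \ hexFirstLayer Q)^[ℓ] P

/-- The layer number of a cell `c` of `P`: the `ℓ ≥ 1` such that `c` lies in the
first layer of the `(ℓ-1)`-offset of `P`, i.e. the least `n` with `c ∉ hexOffset n P`. -/
noncomputable def hexLayerNum (P : Finset HexCell) (c : HexCell) : ℕ :=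
  sInf {n : ℕ | c ∉ hexOffset n P}

/-- A cell `c` belongs to a narrow passage of `P` if it lies in the first layer of `P` and
removing it does not change the layer number of any other cell. -/
def hexNarrowCell (P : Finset HexCell) (c : HexCell) : Prop :=
  c ∈ hexFirstLayer P ∧
    ∀ c' ∈ P.erase c, hexLayerNum (P.erase c) c' = hexLayerNum P c'

/-- `P` has a split cell in its first layer: there is a set `Q` consisting of a single
first-layer cell, or of two adjacent first-layer cells, with `P \\ Q` disconnected. -/
def hexSplitInFirstLayer (P : Finset HexCell) : Prop :=
  ∃ Q : Finset HexCell,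
    ((∃ a ∈ hexFirstLayer P, Q = {a}) ∨
      (∃ a ∈ hexFirstLayer P, ∃ b ∈ hexFirstLayer P, a ≠ b ∧ hexAdj a b ∧ Q = {a, b})) ∧
    ¬ connectedOn hexAdj (↑(P \ Q) : Set HexCell)

/-- Graph distance in the (full) hexagonal grid: least number of steps between
adjacent cells needed to go from `a` to `b`. -/
noncomputable def hexDist (a b : HexCell) : ℕ :=
  sInf {n : ℕ | ∃ w : ℕ → HexCell, w 0 = a ∧ w n = b ∧ ∀ i < n, hexAdj (w i) (w (i + 1))}

/-! Every cell has six neighbours, and along a corridor the numbers of neighbours inside `P`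
add up to `2 (C - 1)`, the degree sum of a path; hence `E = 6 C - 2 (C - 1)`. A tour must reach
both ends of the corridor: reading its cells by their position along the corridor gives a closed
integer walk with unit steps that meets `0` and `C - 1`, so it has length at least `2 (C - 1)`. -/

open Finset

lemma card_hexNbrs (c : HexCell) : #(hexNbrs c) = 6 := by
  simp only [hexNbrs]
  repeat rw [card_insert_of_notMem (by simp only [mem_insert, mem_singleton, Prod.ext_iff]; omega)]
  rfl

lemma hexPerim_add_sum_card_hexNbrs_inter (P : Finset HexCell) :
    hexPerim P + ∑ c ∈ P, #(hexNbrs c ∩ P) = 6 * #P := by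
  simp only [hexPerim, ← sum_add_distrib, card_sdiff_add_card_inter, card_hexNbrs,
    sum_const, smul_eq_mul, mul_comm]

lemma Fin.sum_card_filter_succ_eq_or_succ_eq (n : ℕ) :
    ∑ i : Fin n, #{j : Fin n | (i : ℕ) + 1 = j ∨ (j : ℕ) + 1 = i} = 2 * (n - 1) := by
  have hsucc (i : Fin n) :
      ∑ j : Fin n, (if (i : ℕ) + 1 = j then 1 else 0) = if (i : ℕ) + 1 < n then 1 else 0 := by
    rw [Fin.sum_univ_eq_sum_range (fun j => if (i : ℕ) + 1 = j then 1 else 0)]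
    simp
  calc ∑ i : Fin n, #{j : Fin n | (i : ℕ) + 1 = j ∨ (j : ℕ) + 1 = i}
      = ∑ i : Fin n, ∑ j : Fin n,
          ((if (i : ℕ) + 1 = j then 1 else 0) + (if (j : ℕ) + 1 = i then 1 else 0)) := by
        simp only [card_filter]
        refine sum_congr rfl fun i _ => sum_congr rfl fun j _ => ?_
        split_ifs <;> omega
    _ = 2 * ∑ i : Fin n, if (i : ℕ) + 1 < n then 1 else 0 := by
        simp only [sum_add_distrib]
        rw [sum_comm (f := fun i j : Fin n => if (j : ℕ) + 1 = i then 1 else 0)]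
        simp only [hsucc]
        ring
    _ = 2 * (n - 1) := by
        rw [Fin.sum_univ_eq_sum_range (fun i => if i + 1 < n then 1 else 0), ← card_filter]
        congr
        rw [← card_range (n - 1)]
        congr 1
        ext i
        simp only [mem_filter, mem_range]
        omega

lemma abs_sub_le_of_abs_succ_sub_le_one {g : ℕ → ℤ} {L : ℕ}
    (hstep : ∀ i < L, |g (i + 1) - g i| ≤ 1) {i j : ℕ} (hij : i ≤ j) (hjL : j ≤ L) :
    |g j - g i| ≤ j - i := by
  induction j, hij using Nat.le_induction with
  | base => simp
  | succ j hij ih =>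
    calc |g (j + 1) - g i| ≤ |g (j + 1) - g j| + |g j - g i| := abs_sub_le _ _ _
      _ ≤ 1 + (j - i) := add_le_add (hstep j (by omega)) (ih (by omega))
      _ = ((j + 1 : ℕ) : ℤ) - i := by push_cast; ring

/-- A closed walk with unit steps goes from `a` to `b` and back. -/
lemma two_mul_abs_sub_le_of_abs_succ_sub_le_one {g : ℕ → ℤ} {L : ℕ}
    (hstep : ∀ i < L, |g (i + 1) - g i| ≤ 1) (hclosed : g 0 = g L) {a b : ℕ}
    (ha : a ≤ L) (hb : b ≤ L) : 2 * |g b - g a| ≤ L := by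
  wlog hab : a ≤ b generalizing a b
  · rw [abs_sub_comm]
    exact this hb ha (by omega)
  have hout := abs_sub_le_of_abs_succ_sub_le_one hstep hab hb
  have hback : |g b - g a| ≤ |g L - g b| + |g a - g 0| := by
    rw [← hclosed, abs_sub_comm (g 0) (g b), abs_sub_comm (g a)]
    exact abs_sub_le _ _ _
  have hbL := abs_sub_le_of_abs_succ_sub_le_one hstep hb le_rfl
  have h0a := abs_sub_le_of_abs_succ_sub_le_one hstep (Nat.zero_le a) ha
  push_cast at h0a
  linarith

structure IsHexCorridor (P : Finset HexCell) (f : Fin #P → HexCell) : Prop where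
  injective : Function.Injective f
  mem_iff : ∀ c, c ∈ P ↔ ∃ i, f i = c
  adj_iff : ∀ i j : Fin #P, hexAdj (f i) (f j) ↔ ((i : ℕ) + 1 = j ∨ (j : ℕ) + 1 = i)

namespace IsHexCorridor

variable {P : Finset HexCell} {f : Fin #P → HexCell}

lemma sum_card_hexNbrs_inter (hf : IsHexCorridor P f) :
    ∑ c ∈ P, #(hexNbrs c ∩ P) = 2 * (#P - 1) := by
  have hnbrs (i : Fin #P) :
      hexNbrs (f i) ∩ P =
        ({j | (i : ℕ) + 1 = j ∨ (j : ℕ) + 1 = i} : Finset (Fin #P)).map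
          ⟨f, hf.injective⟩ := by
    ext c
    simp only [mem_inter, hf.mem_iff c, mem_map, mem_filter_univ, Function.Embedding.coeFn_mk]
    constructor
    · rintro ⟨hadj, j, rfl⟩
      exact ⟨j, (hf.adj_iff i j).1 hadj, rfl⟩
    · rintro ⟨j, hj, rfl⟩
      exact ⟨(hf.adj_iff i j).2 hj, j, rfl⟩
  calc ∑ c ∈ P, #(hexNbrs c ∩ P) = ∑ i : Fin #P, #(hexNbrs (f i) ∩ P) := by
        refine (sum_nbij f (fun i _ => (hf.mem_iff _).2 ⟨i, rfl⟩) hf.injective.injOn ?_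
          fun _ _ => rfl).symm
        intro c hc
        obtain ⟨i, rfl⟩ := (hf.mem_iff c).1 hc
        exact ⟨i, mem_coe.2 (mem_univ i), rfl⟩
    _ = 2 * (#P - 1) := by
        simp only [hnbrs, card_map, Fin.sum_card_filter_succ_eq_or_succ_eq]

lemma hexPerim_eq (hf : IsHexCorridor P f) (hne : P.Nonempty) : hexPerim P = 4 * #P + 2 := by
  have := hexPerim_add_sum_card_hexNbrs_inter P
  rw [hf.sum_card_hexNbrs_inter] at this
  have := hne.card_pos
  omega

lemma two_mul_card_sub_one_le_of_isHexTour (hf : IsHexCorridor P f) {w : ℕ → HexCell}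
    {L : ℕ} (hw : IsHexTour P w L) : 2 * (#P - 1) ≤ L := by
  obtain ⟨hclosed, hmem, hadj, hvisit⟩ := hw
  rcases Nat.eq_zero_or_pos #P with hempty | hpos
  · simp [hempty]
  have : Nonempty (Fin #P) := ⟨⟨0, hpos⟩⟩
  set g : ℕ → ℤ := fun i => ((Function.invFun f (w i) : Fin #P) : ℕ)
  have hfg (i : ℕ) (hi : i ≤ L) : f (Function.invFun f (w i)) = w i :=
    Function.invFun_eq ((hf.mem_iff _).1 (hmem i hi))
  have hstep (i : ℕ) (hi : i < L) : |g (i + 1) - g i| ≤ 1 := by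
    have := (hf.adj_iff _ _).1 (hfg i hi.le ▸ hfg (i + 1) hi ▸ hadj i hi)
    simp only [g, abs_le]
    omega
  have hindex (k : Fin #P) : ∃ a ≤ L, g a = k := by
    obtain ⟨a, ha, hwa⟩ := hvisit (f k) ((hf.mem_iff _).2 ⟨k, rfl⟩)
    exact ⟨a, ha, by simp only [g, hwa, Function.leftInverse_invFun hf.injective k]⟩
  obtain ⟨a, ha, hga⟩ := hindex ⟨0, hpos⟩
  obtain ⟨b, hb, hgb⟩ := hindex ⟨#P - 1, by omega⟩
  have := two_mul_abs_sub_le_of_abs_succ_sub_le_one hstep (by simp [g, hclosed]) ha hb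
  rw [hga, hgb] at this
  push_cast at this
  rw [abs_of_nonneg (by omega)] at this
  omega

end IsHexCorridor

/-- If the adjacency graph of a hexagonal grid polygon `P` is a simple path on its
`C(P)` cells (a corridor of width 1), then `E(P) = 4·C(P) + 2`, every exploration tour
of `P` has length at least `2·C(P) − 2`, and `2·C(P) − 2 = C(P) + E(P)/4 − 5/2`;
hence the upper bound `C + E/4 − 5/2` is tight. -/
theorem hex_width_one_corridor_tight (P : Finset HexCell) (hP : hexPolygon P)
    (f : Fin P.card → HexCell) (hinj : Function.Injective f)
    (hrange : ∀ c, c ∈ P ↔ ∃ i, f i = c)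
    (hpath : ∀ i j : Fin P.card,
      hexAdj (f i) (f j) ↔ ((i : ℕ) + 1 = (j : ℕ) ∨ (j : ℕ) + 1 = (i : ℕ))) :
    hexPerim P = 4 * P.card + 2 ∧
    (∀ (w : ℕ → HexCell) (L : ℕ), IsHexTour P w L →
      2 * (P.card : ℚ) - 2 ≤ (L : ℚ)) ∧
    2 * (P.card : ℚ) - 2 = (P.card : ℚ) + (hexPerim P : ℚ) / 4 - 5 / 2 := by
  have hf : IsHexCorridor P f := ⟨hinj, hrange, hpath⟩
  have hpos := hP.1.card_pos
  have hperim := hf.hexPerim_eq hP.1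
  refine ⟨hperim, fun w L hw => ?_, by rw [hperim]; push_cast; ring⟩
  have := hf.two_mul_card_sub_one_le_of_isHexTour hw
  rw [← Nat.cast_le (α := ℚ)] at this
  push_cast [Nat.cast_sub hpos] at this
  linarith
end

section
/- If P is a triangular grid polygon whose adjacency graph is a simple path on its C(P) cells (a corridor of width 1), then E(P) = C(P) + 2, and every exploration tour of P has length at least 2·C(P) − 2 = C(P) + E(P) − 4; hence the upper bound C + E − 4 for exploring simple triangular grid polygons is tight. -/
/-- A triangular grid cell `(x, y, u)`: `u = false` for upward, `u = true` for downward. -/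
abbrev TriCell : Type := ℤ × ℤ × Bool

/-- The three edge-neighbors of a triangular cell. -/
def triNbrs (c : TriCell) : Finset TriCell :=
  if c.2.2 = false then
    {(c.1, c.2.1, true), (c.1 - 1, c.2.1, true), (c.1, c.2.1 - 1, true)}
  else
    {(c.1, c.2.1, false), (c.1 + 1, c.2.1, false), (c.1, c.2.1 + 1, false)}

/-- Adjacency of triangular cells (sharing an edge). -/
def triAdj (a b : TriCell) : Prop := b ∈ triNbrs a

/-- The corner points of a triangular cell in the standard geometric realization. -/
def triCorners (c : TriCell) : Finset (ℤ × ℤ) :=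
  if c.2.2 = false then {(c.1, c.2.1), (c.1 + 1, c.2.1), (c.1, c.2.1 + 1)}
  else {(c.1 + 1, c.2.1), (c.1, c.2.1 + 1), (c.1 + 1, c.2.1 + 1)}

/-- The six triangular cells having the lattice point `v` as a corner. -/
def trisAtCorner (v : ℤ × ℤ) : Finset TriCell :=
  {(v.1, v.2, false), (v.1 - 1, v.2, false), (v.1, v.2 - 1, false),
   (v.1 - 1, v.2, true), (v.1, v.2 - 1, true), (v.1 - 1, v.2 - 1, true)}

/-- The cells touching `c`: the distinct cells sharing at least a corner point with `c`. -/
def triTouchNbrs (c : TriCell) : Finset TriCell :=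
  ((triCorners c).biUnion trisAtCorner).erase c

/-- Two distinct cells touch if they share at least a corner point. -/
def triTouch (a b : TriCell) : Prop := b ∈ triTouchNbrs a

/-- A triangular grid polygon: a finite nonempty set of cells, connected under adjacency. -/
def triPolygon (P : Finset TriCell) : Prop :=
  P.Nonempty ∧ connectedOn triAdj (↑P : Set TriCell)

/-- A triangular grid polygon is simple if its complement is connected under touching. -/
def triSimple (P : Finset TriCell) : Prop :=
  connectedOn triTouch ((↑P : Set TriCell)ᶜ)

/-- The perimeter `E(P)`: the number of pairs `(c, c')` with `c ∈ P`, `c' ∉ P`, adjacent. -/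
def triPerim (P : Finset TriCell) : ℕ :=
  ∑ c ∈ P, (triNbrs c \ P).card

/-- An exploration tour of `P`: a closed walk `w 0, w 1, …, w L` in `P`
(consecutive cells adjacent, `w 0 = w L`) visiting every cell of `P`;
its length is `L` (the number of steps). -/
def IsTriTour (P : Finset TriCell) (w : ℕ → TriCell) (L : ℕ) : Prop :=
  w 0 = w L ∧ (∀ i ≤ L, w i ∈ P) ∧ (∀ i < L, triAdj (w i) (w (i + 1))) ∧
    ∀ c ∈ P, ∃ i ≤ L, w i = c

/-- A path in `P` from `s` to `t`: a list of cells of `P`, consecutive cells adjacent;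
its length (number of steps) is `l.length - 1`. -/
def IsTriPathIn (P : Finset TriCell) (l : List TriCell) (s t : TriCell) : Prop :=
  l.head? = some s ∧ l.getLast? = some t ∧ (∀ c ∈ l, c ∈ P) ∧ l.Chain' triAdj

/-- The first layer of `P`: cells of `P` touching some cell not in `P`. -/
def triFirstLayer (P : Finset TriCell) : Finset TriCell :=
  P.filter (fun c => (triTouchNbrs c \ P).Nonempty)

/-- The `ℓ`-offset of `P`: remove the first layer `ℓ` times. -/
def triOffset (ℓ : ℕ) (P : Finset TriCell) : Finset TriCell :=
  (fun Q => Q \ triFirstLayer Q)^[ℓ] P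

/-- The layer number of a cell `c` of `P`: the `ℓ ≥ 1` such that `c` lies in the
first layer of the `(ℓ-1)`-offset of `P`, i.e. the least `n` with `c ∉ triOffset n P`. -/
noncomputable def triLayerNum (P : Finset TriCell) (c : TriCell) : ℕ :=
  sInf {n : ℕ | c ∉ triOffset n P}

/-- A cell `c` belongs to a narrow passage of `P` if it lies in the first layer of `P` and
removing it does not change the layer number of any other cell. -/
def triNarrowCell (P : Finset TriCell) (c : TriCell) : Prop :=
  c ∈ triFirstLayer P ∧
    ∀ c' ∈ P.erase c, triLayerNum (P.erase c) c' = triLayerNum P c'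

/-- `P` has a split cell in its first layer: there is a set `Q` of first-layer cells,
consisting either of a single cell, or of the cells of a shortest path in `P` joining
two touching first-layer cells, such that `P \\ Q` is disconnected. -/
def triSplitInFirstLayer (P : Finset TriCell) : Prop :=
  ∃ Q : Finset TriCell, Q ⊆ triFirstLayer P ∧
    ((∃ a ∈ triFirstLayer P, Q = {a}) ∨
      (∃ a ∈ triFirstLayer P, ∃ b ∈ triFirstLayer P, triTouch a b ∧
        ∃ l : List TriCell, IsTriPathIn P l a b ∧
          (∀ l' : List TriCell, IsTriPathIn P l' a b → l.length ≤ l'.length) ∧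
          Q = l.toFinset)) ∧
    ¬ connectedOn triAdj (↑(P \ Q) : Set TriCell)

/-- One growth step: add all cells touching the current set. -/
def triGrow (S : Finset TriCell) : Finset TriCell :=
  S ∪ S.biUnion triTouchNbrs


lemma card3 (p q r : TriCell) (h1 : p ≠ q) (h2 : p ≠ r) (h3 : q ≠ r) :
    ({p, q, r} : Finset TriCell).card = 3 := by
  rw [Finset.card_insert_of_notMem (by simp [h1, h2]),
      Finset.card_insert_of_notMem (by simp [h3]), Finset.card_singleton]

lemma triNbrs_card (c : TriCell) : (triNbrs c).card = 3 := by
  rcases c with ⟨x, y, u⟩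
  cases u
  · rw [triNbrs, if_pos rfl]
    exact card3 _ _ _ (by simp [Prod.ext_iff] <;> omega) (by simp [Prod.ext_iff] <;> omega)
      (by simp [Prod.ext_iff] <;> omega)
  · rw [triNbrs, if_neg (by simp)]
    exact card3 _ _ _ (by simp [Prod.ext_iff] <;> omega) (by simp [Prod.ext_iff] <;> omega)
      (by simp [Prod.ext_iff] <;> omega)

lemma card_filter_succ (n : ℕ) (i : Fin n) :
    (Finset.univ.filter fun j : Fin n => (i : ℕ) + 1 = (j : ℕ)).card
      = if (i : ℕ) + 1 < n then 1 else 0 := by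
  split_ifs with h
  · rw [Finset.card_eq_one]
    exact ⟨⟨(i : ℕ) + 1, h⟩, by ext j; simp [Fin.ext_iff, eq_comm]⟩
  · rw [Finset.card_eq_zero, Finset.filter_eq_empty_iff]
    intro j _
    have := j.2
    omega

lemma card_filter_pred (n : ℕ) (i : Fin n) :
    (Finset.univ.filter fun j : Fin n => (j : ℕ) + 1 = (i : ℕ)).card
      = if 0 < (i : ℕ) then 1 else 0 := by
  split_ifs with h
  · rw [Finset.card_eq_one]
    refine ⟨⟨(i : ℕ) - 1, by have := i.2; omega⟩, ?_⟩
    ext j; simp [Fin.ext_iff]; omega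
  · rw [Finset.card_eq_zero, Finset.filter_eq_empty_iff]
    intro j _
    omega

lemma sum_if_succ (n : ℕ) (hn : 0 < n) :
    (∑ i : Fin n, if (i : ℕ) + 1 < n then 1 else 0) = n - 1 := by
  rw [Finset.sum_ite, Finset.sum_const, Finset.sum_const, smul_eq_mul, smul_eq_mul,
    mul_one, mul_zero, add_zero]
  have hneg : (Finset.univ.filter fun i : Fin n => ¬ ((i : ℕ) + 1 < n)) = {⟨n - 1, by omega⟩} := by
    ext i
    have := i.2
    simp [Fin.ext_iff] <;> omega
  have := Finset.card_filter_add_card_filter_not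
    (s := (Finset.univ : Finset (Fin n))) (p := fun i : Fin n => (i : ℕ) + 1 < n)
  rw [hneg] at this
  simp at this ⊢
  omega

lemma sum_if_pred (n : ℕ) (hn : 0 < n) :
    (∑ i : Fin n, if 0 < (i : ℕ) then 1 else 0) = n - 1 := by
  rw [Finset.sum_ite, Finset.sum_const, Finset.sum_const, smul_eq_mul, smul_eq_mul,
    mul_one, mul_zero, add_zero]
  have hneg : (Finset.univ.filter fun i : Fin n => ¬ (0 < (i : ℕ))) = {⟨0, hn⟩} := by
    ext i
    simp [Fin.ext_iff] <;> omega
  have := Finset.card_filter_add_card_filter_not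
    (s := (Finset.univ : Finset (Fin n))) (p := fun i : Fin n => 0 < (i : ℕ))
  rw [hneg] at this
  simp at this ⊢
  omega

/-- If the adjacency graph of a triangular grid polygon `P` is a simple path on its
`C(P)` cells (a corridor of width 1), then `E(P) = C(P) + 2`, every exploration tour
of `P` has length at least `2·C(P) − 2`, and `2·C(P) − 2 = C(P) + E(P) − 4`;
hence the upper bound `C + E − 4` is tight. -/
theorem tri_width_one_corridor_tight (P : Finset TriCell) (hP : triPolygon P)
    (f : Fin P.card → TriCell) (hinj : Function.Injective f)
    (hrange : ∀ c, c ∈ P ↔ ∃ i, f i = c)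
    (hpath : ∀ i j : Fin P.card,
      triAdj (f i) (f j) ↔ ((i : ℕ) + 1 = (j : ℕ) ∨ (j : ℕ) + 1 = (i : ℕ))) :
    triPerim P = P.card + 2 ∧
    (∀ (w : ℕ → TriCell) (L : ℕ), IsTriTour P w L →
      2 * (P.card : ℤ) - 2 ≤ (L : ℤ)) ∧
    2 * (P.card : ℤ) - 2 = (P.card : ℤ) + (triPerim P : ℤ) - 4 := by
  classical
  have hn : 0 < P.card := Finset.card_pos.mpr hP.1
  -- degree of each cell inside P
  have hdeg : ∀ i : Fin P.card, (triNbrs (f i) ∩ P).card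
      = (Finset.univ.filter fun j : Fin P.card => (i : ℕ) + 1 = (j : ℕ) ∨ (j : ℕ) + 1 = (i : ℕ)).card := by
    intro i
    refine (Finset.card_bij (fun j _ => f j) ?_ ?_ ?_).symm
    · intro j hj
      rw [Finset.mem_filter] at hj
      refine Finset.mem_inter.mpr ⟨(hpath i j).mpr hj.2, (hrange _).mpr ⟨j, rfl⟩⟩
    · intro j _ k _ h
      exact hinj h
    · intro c hc
      rw [Finset.mem_inter] at hc
      obtain ⟨j, hj⟩ := (hrange c).mp hc.2
      have hadj : triAdj (f i) (f j) := by rw [hj]; exact hc.1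
      exact ⟨j, Finset.mem_filter.mpr ⟨Finset.mem_univ _, (hpath i j).mp hadj⟩, hj⟩
  have hdegval : ∀ i : Fin P.card, (triNbrs (f i) ∩ P).card
      = (if (i : ℕ) + 1 < P.card then 1 else 0) + (if 0 < (i : ℕ) then 1 else 0) := by
    intro i
    rw [hdeg i]
    have hdisj : Disjoint (Finset.univ.filter fun j : Fin P.card => (i : ℕ) + 1 = (j : ℕ))
        (Finset.univ.filter fun j : Fin P.card => (j : ℕ) + 1 = (i : ℕ)) := by
      rw [Finset.disjoint_left]
      intro j h1 h2
      rw [Finset.mem_filter] at h1 h2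
      omega
    rw [Finset.filter_or, Finset.card_union_of_disjoint hdisj, card_filter_succ, card_filter_pred]
  have hPimage : P = Finset.image f Finset.univ := by
    ext c
    simp [hrange c]
  -- perimeter computation
  have hperim : triPerim P = P.card + 2 := by
    have hsum : triPerim P = ∑ i : Fin P.card, (triNbrs (f i) \ P).card := by
      rw [triPerim]
      exact (Finset.sum_bij (fun (i : Fin P.card) (_ : i ∈ Finset.univ) => f i)
        (fun i _ => (hrange _).mpr ⟨i, rfl⟩) (fun i _ j _ h => hinj h)
        (fun c hc => by obtain ⟨i, hi⟩ := (hrange c).mp hc; exact ⟨i, Finset.mem_univ i, hi⟩)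
        (fun i _ => rfl)).symm
    have hterm : ∀ i : Fin P.card, (triNbrs (f i) \ P).card + (triNbrs (f i) ∩ P).card = 3 := by
      intro i
      rw [Finset.card_sdiff_add_card_inter, triNbrs_card]
    have htot : triPerim P + ∑ i : Fin P.card, (triNbrs (f i) ∩ P).card = 3 * P.card := by
      rw [hsum, ← Finset.sum_add_distrib]
      rw [Finset.sum_congr rfl fun i _ => hterm i, Finset.sum_const, Finset.card_univ,
        Fintype.card_fin, smul_eq_mul, mul_comm]
    have hD : ∑ i : Fin P.card, (triNbrs (f i) ∩ P).card = (P.card - 1) + (P.card - 1) := by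
      calc ∑ i : Fin P.card, (triNbrs (f i) ∩ P).card
          = ∑ i : Fin P.card, ((if (i : ℕ) + 1 < P.card then 1 else 0) + (if 0 < (i : ℕ) then 1 else 0)) := by
            exact Finset.sum_congr rfl fun i _ => hdegval i
        _ = (P.card - 1) + (P.card - 1) := by
            rw [Finset.sum_add_distrib, sum_if_succ P.card hn, sum_if_pred P.card hn]
    omega
  refine ⟨hperim, ?_, by rw [hperim]; push_cast; ring⟩
  -- tour lower bound
  intro w L hw
  obtain ⟨hclosed, hmem, hadj, hvisit⟩ := hw
  by_cases hn1 : P.card = 1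
  · have : 2 * (P.card : ℤ) - 2 = 0 := by rw [hn1]; ring
    rw [this]
    positivity
  -- index function
  set F : TriCell → Fin P.card := fun c => if h : ∃ i, f i = c then h.choose else ⟨0, hn⟩ with hF
  have hFspec : ∀ c ∈ P, f (F c) = c := by
    intro c hc
    have h : ∃ i, f i = c := (hrange c).mp hc
    simp only [hF, dif_pos h]
    exact h.choose_spec
  have hFf : ∀ i : Fin P.card, F (f i) = i := by
    intro i
    exact hinj (hFspec (f i) ((hrange _).mpr ⟨i, rfl⟩))
  set G : ℕ → ℤ := fun t => ((F (w t) : ℕ) : ℤ) with hG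
  have hstep : ∀ t < L, G (t + 1) = G t + 1 ∨ G t = G (t + 1) + 1 := by
    intro t ht
    have h1 : w t ∈ P := hmem t (by omega)
    have h2 : w (t + 1) ∈ P := hmem (t + 1) (by omega)
    have ha : triAdj (f (F (w t))) (f (F (w (t + 1)))) := by
      rw [hFspec _ h1, hFspec _ h2]
      exact hadj t ht
    have := (hpath _ _).mp ha
    simp only [hG]
    omega
  have lip : ∀ d s, s + d ≤ L → G (s + d) ≤ G s + d ∧ G s ≤ G (s + d) + d := by
    intro d
    induction d with
    | zero => intro s _; simp
    | succ k ih =>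
      intro s hs
      have h1 := ih s (by omega)
      have h2 := hstep (s + k) (by omega)
      have e : s + (k + 1) = (s + k) + 1 := by omega
      rw [e]
      push_cast
      omega
  have hG0L : G 0 = G L := by rw [hG]; simp [hclosed]
  obtain ⟨a, ha, hwa⟩ := hvisit (f ⟨0, hn⟩) ((hrange _).mpr ⟨_, rfl⟩)
  obtain ⟨b, hb, hwb⟩ := hvisit (f ⟨P.card - 1, by omega⟩) ((hrange _).mpr ⟨_, rfl⟩)
  have hGa : G a = 0 := by rw [hG]; simp [hwa, hFf]
  have hGb : G b = (P.card : ℤ) - 1 := by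
    rw [hG]
    simp only [hwb, hFf]
    push_cast
    omega
  rcases le_total a b with hab | hab
  · have h1 := lip (b - a) a (by omega)
    have h2 := lip a 0 (by omega)
    have h3 := lip (L - b) b (by omega)
    rw [show a + (b - a) = b from by omega] at h1
    rw [show (0 : ℕ) + a = a from by omega] at h2
    rw [show b + (L - b) = L from by omega] at h3
    push_cast at h1 h2 h3 ⊢
    omega
  · have h1 := lip (a - b) b (by omega)
    have h2 := lip b 0 (by omega)
    have h3 := lip (L - a) a (by omega)
    rw [show b + (a - b) = a from by omega] at h1
    rw [show (0 : ℕ) + b = b from by omega] at h2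
    rw [show a + (L - a) = L from by omega] at h3
    push_cast at h1 h2 h3 ⊢
    omega
end

section
/- For any two cells s and t of a simple hexagonal grid polygon P, the length of a shortest path in P from s to t is at most (1/4)·E(P) − 3/2. -/
/-!
Take a shortest path `s = w₀, …, w_d = t` in `P`. For each of the six directions `e`, call `i`
an entry time if `i = 0` or the step into `w_i` is not parallel to `e`; every step is parallel to
exactly two directions, so there are `4d + 6` pairs (direction, entry time). Send such a pair to
the boundary edge reached by walking from `w_i` in direction `e` until leaving `P`. This map is
injective: if entry times `i < i'` give the same edge, then `w_i` and `w_{i'}` lie on a straight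
segment of `P` of some length `m`; minimality of the path gives `i' - i ≤ m`, while `w_{i'-1}`,
one step off that line, is at hexagonal distance at least `m` from `w_i`, so `m ≤ i' - 1 - i`.
Hence `4d + 6 ≤ E(P)`.
-/

namespace SimpleGraph.Walk

variable {V : Type*} {G : SimpleGraph V} {u v : V}

theorem sub_le_length_of_length_eq_dist (p : G.Walk u v) (hp : p.length = G.dist u v)
    {i j : ℕ} (hj : j ≤ p.length) (q : G.Walk (p.getVert i) (p.getVert j)) :
    j - i ≤ q.length := by
  have := G.dist_le ((p.take i).append (q.append (p.drop j)))
  simp only [length_append, take_length, drop_length] at this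
  omega

end SimpleGraph.Walk

namespace HexGrid

def hexDirs : Finset HexCell := {(1, 0), (-1, 0), (0, 1), (0, -1), (1, -1), (-1, 1)}

lemma zero_notMem_hexDirs : (0 : HexCell) ∉ hexDirs := by decide

lemma neg_mem_hexDirs {e : HexCell} (he : e ∈ hexDirs) : -e ∈ hexDirs := by
  revert e; decide

lemma pair_neg_eq_of_mem {e e' : HexCell} (he' : e' ∈ ({e, -e} : Finset HexCell)) :
    ({e', -e'} : Finset HexCell) = {e, -e} := by
  simp only [Finset.mem_insert, Finset.mem_singleton] at he'
  rcases he' with rfl | rfl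
  · rfl
  · rw [neg_neg, Finset.pair_comm]

lemma hexAdj_iff_sub_mem {a b : HexCell} : hexAdj a b ↔ b - a ∈ hexDirs := by
  obtain ⟨a1, a2⟩ := a
  obtain ⟨b1, b2⟩ := b
  simp only [hexAdj, hexNbrs, hexDirs, Finset.mem_insert, Finset.mem_singleton, Prod.ext_iff,
    Prod.fst_sub, Prod.snd_sub]
  omega

lemma hexNbrs_eq_image (c : HexCell) : hexNbrs c = hexDirs.image (c + ·) := by
  ext b
  rw [← hexAdj, hexAdj_iff_sub_mem, Finset.mem_image]
  exact ⟨fun h => ⟨b - c, h, add_sub_cancel c b⟩, by rintro ⟨e, he, rfl⟩; simpa using he⟩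

lemma hexPerim_eq_sum_hexDirs (P : Finset HexCell) :
    hexPerim P = ∑ e ∈ hexDirs, (P.filter (· + e ∉ P)).card := by
  have hcell : ∀ c, (hexNbrs c \ P).card = (hexDirs.filter (c + · ∉ P)).card := by
    intro c
    rw [hexNbrs_eq_image, Finset.sdiff_eq_filter, Finset.filter_image,
      Finset.card_image_of_injective _ (add_right_injective c)]
  simp only [hexPerim, hcell, Finset.card_filter]
  exact Finset.sum_comm

/-- The graph distance from `0` in the hexagonal grid. -/
def hexNorm (v : HexCell) : ℤ := max |v.1| (max |v.2| |v.1 + v.2|)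

lemma hexNorm_add_le (v w : HexCell) : hexNorm (v + w) ≤ hexNorm v + hexNorm w := by
  have h1 := abs_add_le v.1 w.1
  have h2 := abs_add_le v.2 w.2
  have h3 : |v.1 + w.1 + (v.2 + w.2)| ≤ |v.1 + v.2| + |w.1 + w.2| := by
    rw [add_add_add_comm]
    exact abs_add_le _ _
  simp only [hexNorm, Prod.fst_add, Prod.snd_add]
  omega

lemma hexNorm_of_mem_hexDirs {e : HexCell} (he : e ∈ hexDirs) : hexNorm e = 1 := by
  revert e; decide

lemma le_hexNorm_nsmul_sub {e u : HexCell} (he : e ∈ hexDirs) (hu : u ∈ hexDirs)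
    (hue : u ∉ ({e, -e} : Finset HexCell)) (m : ℕ) : (m : ℤ) ≤ hexNorm (m • e - u) := by
  simp only [hexDirs, Finset.mem_insert, Finset.mem_singleton] at he hu
  simp only [Finset.mem_insert, Finset.mem_singleton, not_or] at hue
  rcases he with rfl | rfl | rfl | rfl | rfl | rfl <;>
    rcases hu with rfl | rfl | rfl | rfl | rfl | rfl <;>
    simp_all [hexNorm, abs_eq_max_neg]

def hexGraphIn (P : Finset HexCell) : SimpleGraph HexCell where
  Adj a b := a ∈ P ∧ b ∈ P ∧ hexAdj a b
  symm := ⟨fun a b ⟨ha, hb, hab⟩ => ⟨hb, ha, hexAdj_iff_sub_mem.2 <| by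
    simpa using neg_mem_hexDirs (hexAdj_iff_sub_mem.1 hab)⟩⟩
  loopless := ⟨fun a ⟨_, _, haa⟩ =>
    zero_notMem_hexDirs (by simpa using hexAdj_iff_sub_mem.1 haa)⟩

lemma reachable_of_connectedOn {P : Finset HexCell} {u v : HexCell}
    (hP : connectedOn hexAdj (P : Set HexCell)) (hu : u ∈ P) (hv : v ∈ P) :
    (hexGraphIn P).Reachable u v :=
  (SimpleGraph.reachable_iff_reflTransGen u v).2 (hP u hu v hv)

section Ray

variable {P : Finset HexCell} {c e : HexCell}

lemma exists_add_succ_nsmul_notMem (P : Finset HexCell) (c : HexCell) (he : e ≠ 0) :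
    ∃ k : ℕ, c + (k + 1) • e ∉ P := by
  by_contra! h
  have hinj : Function.Injective fun k : ℕ => c + (k + 1) • e := by
    intro k k' hk
    have hk' := add_left_cancel hk
    rw [← natCast_zsmul, ← natCast_zsmul] at hk'
    have := smul_left_injective ℤ he hk'
    push_cast at this
    omega
  exact Set.infinite_of_injective_forall_mem hinj h P.finite_toSet

-- A junk value `0` when `e = 0`.
noncomputable def rayLen (P : Finset HexCell) (c e : HexCell) : ℕ :=
  sInf {k | c + (k + 1) • e ∉ P}

noncomputable def rayEnd (P : Finset HexCell) (c e : HexCell) : HexCell :=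
  c + rayLen P c e • e

lemma rayEnd_add_notMem (P : Finset HexCell) (c : HexCell) (he : e ≠ 0) :
    rayEnd P c e + e ∉ P := by
  have : c + (rayLen P c e + 1) • e ∉ P := Nat.sInf_mem (exists_add_succ_nsmul_notMem P c he)
  rwa [succ_nsmul, ← add_assoc] at this

lemma add_nsmul_mem_of_le_rayLen (hc : c ∈ P) {t : ℕ} (ht : t ≤ rayLen P c e) :
    c + t • e ∈ P := by
  cases t with
  | zero => simpa using hc
  | succ t => simpa using Nat.notMem_of_lt_sInf ht

lemma rayEnd_mem (hc : c ∈ P) : rayEnd P c e ∈ P :=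
  add_nsmul_mem_of_le_rayLen hc le_rfl

end Ray

section Walk

variable {P : Finset HexCell} {u v : HexCell} (p : (hexGraphIn P).Walk u v)

lemma mem_of_mem_support (hu : u ∈ P) {x : HexCell} (hx : x ∈ p.support) : x ∈ P := by
  induction p with
  | nil => simp_all
  | cons h q ih =>
    rcases List.mem_cons.1 hx with rfl | hx
    · exact h.1
    · exact ih h.2.1 hx

lemma getVert_mem (hu : u ∈ P) (i : ℕ) : p.getVert i ∈ P :=
  mem_of_mem_support p hu (p.getVert_mem_support i)

lemma getVert_succ_sub_mem_hexDirs {i : ℕ} (hi : i < p.length) :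
    p.getVert (i + 1) - p.getVert i ∈ hexDirs :=
  hexAdj_iff_sub_mem.1 (p.adj_getVert_succ hi).2.2

lemma hexNorm_getVert_sub_le (i : ℕ) :
    ∀ k, i + k ≤ p.length → hexNorm (p.getVert (i + k) - p.getVert i) ≤ k
  | 0, _ => by simp [hexNorm]
  | k + 1, hk => by
    have hstep := hexNorm_of_mem_hexDirs (getVert_succ_sub_mem_hexDirs p (i := i + k) (by omega))
    calc hexNorm (p.getVert (i + k + 1) - p.getVert i)
        = hexNorm ((p.getVert (i + k + 1) - p.getVert (i + k)) +
            (p.getVert (i + k) - p.getVert i)) := by rw [sub_add_sub_cancel]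
      _ ≤ 1 + k := by
        linarith [hexNorm_add_le (p.getVert (i + k + 1) - p.getVert (i + k))
          (p.getVert (i + k) - p.getVert i), hexNorm_getVert_sub_le i k (by omega)]
      _ = (k + 1 : ℕ) := by push_cast; ring

lemma exists_walk_of_segment {c e : HexCell} (he : e ∈ hexDirs) :
    ∀ m : ℕ, (∀ t ≤ m, c + t • e ∈ P) →
      ∃ q : (hexGraphIn P).Walk c (c + m • e), q.length = m
  | 0, _ => ⟨SimpleGraph.Walk.nil.copy rfl (by simp), by simp⟩
  | m + 1, hseg => by
    obtain ⟨q, hq⟩ := exists_walk_of_segment he m (fun t ht => hseg t (by omega))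
    have hstep : c + (m + 1) • e - (c + m • e) = e := by
      rw [succ_nsmul, ← add_assoc, add_sub_cancel_left]
    have hadj : (hexGraphIn P).Adj (c + m • e) (c + (m + 1) • e) :=
      ⟨hseg m (by omega), hseg (m + 1) le_rfl, hexAdj_iff_sub_mem.2 (by rw [hstep]; exact he)⟩
    exact ⟨q.concat hadj, by simp [hq]⟩

lemma exists_walk_of_rayEnd_eq {c c' e : HexCell} (he : e ∈ hexDirs) (hc : c ∈ P)
    (hc' : c' ∈ P) (h : rayEnd P c e = rayEnd P c' e) :
    ∃ e' ∈ ({e, -e} : Finset HexCell), ∃ m : ℕ, c' = c + m • e' ∧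
      ∃ q : (hexGraphIn P).Walk c c', q.length = m := by
  wlog hle : rayLen P c' e ≤ rayLen P c e generalizing c c'
  · obtain ⟨e', he', m, rfl, q, hq⟩ := this hc' hc h.symm (by omega)
    refine ⟨-e', ?_, m, by simp, q.reverse, by simp [hq]⟩
    simp only [Finset.mem_insert, Finset.mem_singleton] at he' ⊢
    rcases he' with rfl | rfl <;> simp
  have hc'eq : c' = c + (rayLen P c e - rayLen P c' e) • e := by
    refine add_right_cancel (b := rayLen P c' e • e) ?_
    rw [add_assoc, ← add_nsmul, Nat.sub_add_cancel hle]
    exact h.symm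
  obtain ⟨q, hq⟩ := exists_walk_of_segment he (rayLen P c e - rayLen P c' e) fun t ht =>
    add_nsmul_mem_of_le_rayLen hc (t := t) (by omega)
  exact ⟨e, by simp, _, hc'eq, q.copy rfl hc'eq.symm, by simp [hq]⟩

lemma isHexPathIn_support (hu : u ∈ P) : IsHexPathIn P p.support u v :=
  ⟨by rw [← p.cons_tail_support]; rfl,
    by simp [List.getLast?_eq_some_getLast, p.getLast_support],
    fun _ hx => mem_of_mem_support p hu hx, p.isChain_adj_support.imp fun _ _ h => h.2.2⟩

end Walk

section Entry

variable {G : SimpleGraph HexCell} {u v : HexCell}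

def entryTimes (p : G.Walk u v) (e : HexCell) : Finset ℕ :=
  insert 0 (((Finset.range p.length).filter fun j =>
    p.getVert (j + 1) - p.getVert j ∉ ({e, -e} : Finset HexCell)).image (· + 1))

lemma card_entryTimes (p : G.Walk u v) (e : HexCell) :
    (entryTimes p e).card = ((Finset.range p.length).filter fun j =>
      p.getVert (j + 1) - p.getVert j ∉ ({e, -e} : Finset HexCell)).card + 1 := by
  rw [entryTimes, Finset.card_insert_of_notMem (by simp),
    Finset.card_image_of_injective _ (add_left_injective 1)]

end Entry

variable {P : Finset HexCell} {u v e : HexCell} (p : (hexGraphIn P).Walk u v)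

lemma sum_card_entryTimes : ∑ e ∈ hexDirs, (entryTimes p e).card = 4 * p.length + 6 := by
  -- every step is parallel to exactly two of the six directions
  have hdirs : ∀ x ∈ hexDirs,
      (hexDirs.filter fun e => x ∉ ({e, -e} : Finset HexCell)).card = 4 := by
    decide
  calc ∑ e ∈ hexDirs, (entryTimes p e).card
      = ∑ j ∈ Finset.range p.length, (hexDirs.filter fun e =>
          p.getVert (j + 1) - p.getVert j ∉ ({e, -e} : Finset HexCell)).card + 6 := by
        simp only [card_entryTimes, Finset.sum_add_distrib, Finset.card_filter]
        rw [Finset.sum_comm]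
        rfl
    _ = 4 * p.length + 6 := by
        rw [Finset.sum_congr rfl fun j hj =>
          hdirs _ (getVert_succ_sub_mem_hexDirs p (Finset.mem_range.1 hj))]
        simp [mul_comm]

lemma rayEnd_getVert_ne (hu : u ∈ P) (hp : p.length = (hexGraphIn P).dist u v)
    (he : e ∈ hexDirs) {i i' : ℕ} (hii' : i < i') (hi' : i' ∈ entryTimes p e) :
    rayEnd P (p.getVert i) e ≠ rayEnd P (p.getVert i') e := by
  intro h
  obtain ⟨j, ⟨hj, hstep⟩, rfl⟩ : ∃ j, (j < p.length ∧
      p.getVert (j + 1) - p.getVert j ∉ ({e, -e} : Finset HexCell)) ∧ j + 1 = i' := by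
    simpa using (Finset.mem_insert.1 hi').resolve_left (by omega)
  obtain ⟨e', he', m, hm, q, hq⟩ :=
    exists_walk_of_rayEnd_eq he (getVert_mem p hu i) (getVert_mem p hu _) h
  have hlong : j + 1 - i ≤ m := hq ▸ p.sub_le_length_of_length_eq_dist hp hj q
  have hshort := hexNorm_getVert_sub_le p i (j - i) (by omega)
  have hoff : (m : ℤ) ≤ hexNorm (m • e' - (p.getVert (j + 1) - p.getVert j)) := by
    refine le_hexNorm_nsmul_sub ?_ (getVert_succ_sub_mem_hexDirs p hj)
      (pair_neg_eq_of_mem he' ▸ hstep) m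
    simp only [Finset.mem_insert, Finset.mem_singleton] at he'
    rcases he' with rfl | rfl
    exacts [he, neg_mem_hexDirs he]
  rw [show m • e' - (p.getVert (j + 1) - p.getVert j) = p.getVert j - p.getVert i by
    rw [hm]; abel, ← show i + (j - i) = j by omega] at hoff
  omega

lemma card_entryTimes_le (hu : u ∈ P) (hp : p.length = (hexGraphIn P).dist u v)
    (he : e ∈ hexDirs) : (entryTimes p e).card ≤ (P.filter (· + e ∉ P)).card := by
  refine Finset.card_le_card_of_injOn (fun i => rayEnd P (p.getVert i) e) (fun i _ => ?_) ?_
  · exact Finset.mem_coe.2 <| Finset.mem_filter.2 ⟨rayEnd_mem (getVert_mem p hu i),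
      rayEnd_add_notMem P _ (ne_of_mem_of_not_mem he zero_notMem_hexDirs)⟩
  · intro i hi i' hi' h
    rcases lt_trichotomy i i' with hlt | heq | hgt
    · exact absurd h (rayEnd_getVert_ne p hu hp he hlt hi')
    · exact heq
    · exact absurd h.symm (rayEnd_getVert_ne p hu hp he hgt hi)

theorem four_mul_length_add_six_le_hexPerim (hu : u ∈ P)
    (hp : p.length = (hexGraphIn P).dist u v) : 4 * p.length + 6 ≤ hexPerim P :=
  calc 4 * p.length + 6 = ∑ e ∈ hexDirs, (entryTimes p e).card := (sum_card_entryTimes p).symm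
    _ ≤ ∑ e ∈ hexDirs, (P.filter (· + e ∉ P)).card :=
      Finset.sum_le_sum fun _ he => card_entryTimes_le p hu hp he
    _ = hexPerim P := (hexPerim_eq_sum_hexDirs P).symm

end HexGrid

theorem hex_shortest_path_bound_general (P : Finset HexCell)
    (hP : hexPolygon P)
    (s t : HexCell) (hs : s ∈ P) (ht : t ∈ P) :
    ∃ l : List HexCell, IsHexPathIn P l s t ∧
      (l.length : ℚ) - 1 ≤ (hexPerim P : ℚ) / 4 - 3 / 2 := by
  obtain ⟨p, hp⟩ := (HexGrid.reachable_of_connectedOn hP.2 hs ht).exists_walk_length_eq_dist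
  have hbound : 4 * p.length + 6 ≤ hexPerim P :=
    HexGrid.four_mul_length_add_six_le_hexPerim p hs hp
  refine ⟨p.support, HexGrid.isHexPathIn_support p hs, ?_⟩
  rw [p.length_support]
  have : (4 * p.length + 6 : ℚ) ≤ hexPerim P := by exact_mod_cast hbound
  push_cast
  linarith

/-- For any two cells `s`, `t` of a simple hexagonal grid polygon `P`, the length of a
shortest path in `P` from `s` to `t` is at most `E(P)/4 − 3/2`: there is a path in `P`
from `s` to `t` with at most that many steps. -/
theorem hex_shortest_path_bound (P : Finset HexCell)
    (hP : hexPolygon P) (hS : hexSimple P)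
    (s t : HexCell) (hs : s ∈ P) (ht : t ∈ P) :
    ∃ l : List HexCell, IsHexPathIn P l s t ∧
      (l.length : ℚ) - 1 ≤ (hexPerim P : ℚ) / 4 - 3 / 2 :=
  hex_shortest_path_bound_general P hP s t hs ht
end
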